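/- arXiv:1910.01876 — 2 statements merged into one kernel-verified Lean document; each statement's English description precedes it below -/
import Mathlib

section
/- For every integer k ≥ 2, ∑_{i=1}^{k} (−1)^{i}·binom(k,i)·i·H_i = 1/(k−1). -/
/-!
Up to the sign `(-1) ^ n`, the alternating binomial sum `∑ i, (-1) ^ i * C(n, i) * f i` is the
`n`-th forward difference of `f` at `0`; hence the sum for `n + 1` and `f` is minus the sum for
`n` and `Δf`. For `f i = i * H_i` we have `Δf i = H_i + 1`, which reduces the theorem to
`∑ i, (-1) ^ i * C(n, i) * H_i = -1 / n`. Since `ΔH_i = 1 / (i + 1)`, the same step reduces this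
to `∑ i, (-1) ^ i * C(n, i) / (i + 1) = 1 / (n + 1)`, which follows from
`C(n, i) / (i + 1) = C(n + 1, i + 1) / (n + 1)` and the vanishing of alternating binomial sums.
-/

open Finset fwdDiff

section AlternatingBinomialSums

variable {R : Type*} [CommRing R]

theorem sum_range_neg_one_pow_mul_choose_mul_eq_fwdDiff_iter (f : ℕ → R) (n : ℕ) :
    ∑ k ∈ range (n + 1), (-1 : R) ^ k * n.choose k * f k = (-1) ^ n * (Δ_[1])^[n] f 0 := by
  rw [fwdDiff_iter_eq_sum_shift, mul_sum]
  refine sum_congr rfl fun k hk => ?_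
  obtain ⟨m, rfl⟩ := Nat.exists_eq_add_of_le (Nat.lt_succ_iff.mp (mem_range.mp hk))
  rw [zsmul_eq_mul, zero_add, smul_eq_mul, mul_one, Nat.add_sub_cancel_left, pow_add]
  push_cast
  have hm : (-1 : R) ^ m * (-1) ^ m = 1 := by rw [← mul_pow, neg_one_mul, neg_neg, one_pow]
  linear_combination (-(-1 : R) ^ k * (k + m).choose k * f k) * hm

theorem sum_range_neg_one_pow_mul_choose_succ_mul (f : ℕ → R) (n : ℕ) :
    ∑ k ∈ range (n + 2), (-1 : R) ^ k * (n + 1).choose k * f k =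
      -∑ k ∈ range (n + 1), (-1 : R) ^ k * n.choose k * Δ_[1] f k := by
  rw [sum_range_neg_one_pow_mul_choose_mul_eq_fwdDiff_iter,
    sum_range_neg_one_pow_mul_choose_mul_eq_fwdDiff_iter, Function.iterate_succ_apply, pow_succ]
  ring

theorem sum_range_neg_one_pow_mul_choose_of_ne_zero {n : ℕ} (hn : n ≠ 0) :
    ∑ k ∈ range (n + 1), (-1 : R) ^ k * n.choose k = 0 := by
  exact_mod_cast congrArg (Int.cast : ℤ → R) (Int.alternating_sum_range_choose_of_ne hn)

end AlternatingBinomialSums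

theorem sum_range_neg_one_pow_mul_choose_div_succ {K : Type*} [Field K] [CharZero K] (n : ℕ) :
    ∑ k ∈ range (n + 1), (-1 : K) ^ k * n.choose k / (k + 1) = 1 / (n + 1) := by
  have hshift : ∑ k ∈ range (n + 1), (-1 : K) ^ k * (n + 1).choose (k + 1) = 1 := by
    have h := sum_range_neg_one_pow_mul_choose_of_ne_zero (R := K) n.succ_ne_zero
    rw [sum_range_succ'] at h
    simp only [pow_succ, Nat.choose_zero_right, pow_zero, Nat.cast_one, mul_one, neg_mul,
      mul_neg, sum_neg_distrib] at h
    linear_combination -h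
  have hterm : ∀ k ∈ range (n + 1), (-1 : K) ^ k * n.choose k / (k + 1) =
      (-1 : K) ^ k * (n + 1).choose (k + 1) / (n + 1) := by
    intro k _
    have h : ((n : K) + 1) * n.choose k = (n + 1).choose (k + 1) * (k + 1) := by
      exact_mod_cast Nat.add_one_mul_choose_eq n k
    rw [div_eq_div_iff k.cast_add_one_ne_zero n.cast_add_one_ne_zero]
    linear_combination (-1 : K) ^ k * h
  rw [sum_congr rfl hterm, ← sum_div, hshift]

theorem fwdDiff_harmonic : Δ_[1] harmonic = fun k : ℕ => 1 / ((k : ℚ) + 1) := by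
  ext k
  simp only [fwdDiff, harmonic_succ, Nat.cast_add, Nat.cast_one, add_sub_cancel_left, one_div]

theorem fwdDiff_natCast_mul_harmonic :
    Δ_[1] (fun k : ℕ => (k : ℚ) * harmonic k) = fun k => harmonic k + 1 := by
  ext k
  rw [fwdDiff, Nat.cast_add_one, harmonic_succ]
  push_cast
  field_simp
  ring

theorem sum_range_neg_one_pow_mul_choose_mul_harmonic {n : ℕ} (hn : n ≠ 0) :
    ∑ k ∈ range (n + 1), (-1 : ℚ) ^ k * n.choose k * harmonic k = -1 / n := by
  obtain ⟨n, rfl⟩ := Nat.exists_eq_succ_of_ne_zero hn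
  rw [sum_range_neg_one_pow_mul_choose_succ_mul, fwdDiff_harmonic]
  simp only [mul_one_div]
  rw [sum_range_neg_one_pow_mul_choose_div_succ]
  push_cast
  ring

theorem alternating_binomial_sum_mul_harmonic (k : ℕ) (hk : 2 ≤ k) :
    ∑ i ∈ Finset.Icc 1 k, (-1 : ℚ) ^ i * (Nat.choose k i : ℚ) * (i : ℚ) * harmonic i =
      1 / ((k : ℚ) - 1) := by
  obtain ⟨n, rfl⟩ : ∃ n, k = n + 1 := ⟨k - 1, by omega⟩
  have hn : n ≠ 0 := by omega
  have hIcc : ∑ i ∈ Icc 1 (n + 1), (-1 : ℚ) ^ i * (n + 1).choose i * i * harmonic i =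
      ∑ i ∈ range (n + 2), (-1 : ℚ) ^ i * (n + 1).choose i * (i * harmonic i) := by
    rw [Nat.range_succ_eq_Icc_zero, ← insert_Icc_add_one_left_eq_Icc n.succ.zero_le,
      sum_insert (by simp)]
    simp only [mul_assoc, CharP.cast_eq_zero, zero_mul, mul_zero, zero_add]
  rw [hIcc, sum_range_neg_one_pow_mul_choose_succ_mul, fwdDiff_natCast_mul_harmonic]
  simp only [mul_add, mul_one, sum_add_distrib]
  rw [sum_range_neg_one_pow_mul_choose_mul_harmonic hn,
    sum_range_neg_one_pow_mul_choose_of_ne_zero hn]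
  push_cast
  ring
end

section
/- For all integers n ≥ 1, r ≥ 1 and 0 ≤ k ≤ n, the k-fold forward difference of the hyperharmonic numbers in the upper index gives h_{n−k}^{(r+k)} = ∑_{i=0}^{k} (−1)^{k−i}·binom(k,i)·h_n^{(r+i)}. -/
/-!
The recursion `h_{n+1}^{(r+1)} = h_n^{(r+1)} + h_{n+1}^{(r)}` says that the forward difference of
`j ↦ h_{n+1}^{(r+j)}` is `j ↦ h_n^{(r+1+j)}`. Iterating, the `k`-th forward difference of
`j ↦ h_{m+k}^{(r+j)}` at `0` is `h_m^{(r+k)}`, and the binomial expansion of an iterated forward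
difference gives the alternating sum.
-/

open Finset fwdDiff

/-- The hyperharmonic numbers: `hyperharmonic n 0 = 1/n`, `hyperharmonic 0 r = 0`,
and `hyperharmonic n r = ∑_{k=1}^{n} hyperharmonic k (r-1)` for `r ≥ 1`. -/
noncomputable def hyperharmonic : ℕ → ℕ → ℝ
  | n, 0 => 1 / n
  | n, (r + 1) => ∑ k ∈ Finset.Icc 1 n, hyperharmonic k r
  termination_by n r => r

lemma hyperharmonic_succ_succ (n r : ℕ) :
    hyperharmonic (n + 1) (r + 1) = hyperharmonic n (r + 1) + hyperharmonic (n + 1) r := by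
  rw [hyperharmonic, sum_Icc_succ_top (by omega), ← hyperharmonic]

lemma fwdDiff_hyperharmonic_upper (n r : ℕ) :
    Δ_[1] (fun j => hyperharmonic (n + 1) (r + j)) = fun j => hyperharmonic n (r + 1 + j) := by
  funext j
  rw [fwdDiff, ← add_assoc, hyperharmonic_succ_succ, add_right_comm, add_sub_cancel_right]

lemma fwdDiff_iter_hyperharmonic_upper (n r k : ℕ) :
    (Δ_[1])^[k] (fun j => hyperharmonic (n + k) (r + j)) =
      fun j => hyperharmonic n (r + k + j) := by
  induction k generalizing r with
  | zero => rfl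
  | succ k ih =>
    rw [Function.iterate_succ_apply, ← add_assoc, fwdDiff_hyperharmonic_upper, ih,
      add_right_comm r 1 k, add_assoc r k 1]

theorem hyperharmonic_fdiff_upper_index_general (n k r : ℕ) (hkn : k ≤ n) :
    hyperharmonic (n - k) (r + k) =
      ∑ i ∈ Finset.range (k + 1),
        (-1 : ℝ) ^ (k - i) * (Nat.choose k i : ℝ) * hyperharmonic n (r + i) := by
  obtain ⟨m, rfl⟩ : ∃ m, n = m + k := ⟨n - k, by omega⟩
  rw [Nat.add_sub_cancel, ← add_zero (r + k),
    ← congrFun (fwdDiff_iter_hyperharmonic_upper m r k) 0, fwdDiff_iter_eq_sum_shift]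
  refine sum_congr rfl fun i _ => ?_
  simp [zsmul_eq_mul, mul_assoc]

theorem hyperharmonic_fdiff_upper_index (n k r : ℕ) (hn : 1 ≤ n) (hr : 1 ≤ r) (hkn : k ≤ n) :
    hyperharmonic (n - k) (r + k) =
      ∑ i ∈ Finset.range (k + 1),
        (-1 : ℝ) ^ (k - i) * (Nat.choose k i : ℝ) * hyperharmonic n (r + i) :=
  hyperharmonic_fdiff_upper_index_general n k r hkn
end
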